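/- Assume the hypotheses identifying E[Y¹|S=1] with γ_{1,1} (consistency, trial exchangeability and positivity for a=1) and the hypotheses identifying E[Y²|S=1] with γ_{0,2} (consistency for a=2, mean transportability for a=2, external positivity of S=0, external exchangeability and positivity for a=2). Then E[Y¹ − Y² | S=1] = ψ := γ_{1,1} − γ_{0,2} = Σ_x (E[Y|X=x,S=1,A=1] − E[Y|X=x,S=0,A=2]) · P(X=x | S=1). -/

import Mathlib

open Finset
open scoped Classical

noncomputable def pr {Ω : Type*} [Fintype Ω] (P : Ω → ℝ) (E : Ω → Prop) : ℝ :=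
  ∑ ω, if E ω then P ω else 0

noncomputable def cexp {Ω : Type*} [Fintype Ω] (P : Ω → ℝ) (Y : Ω → ℝ) (E : Ω → Prop) : ℝ :=
  (∑ ω, if E ω then Y ω * P ω else 0) / pr P E

noncomputable def cpr {Ω : Type*} [Fintype Ω] (P : Ω → ℝ) (E F : Ω → Prop) : ℝ :=
  pr P (fun ω => E ω ∧ F ω) / pr P F

/-! Stratum by stratum: exchangeability and consistency turn `E[Y¹ | X=x, S=1]` into
`E[Y | X=x, S=1, A=1]`; transportability (applicable because external positivity makes the stratum
`X=x, S=0` non-null), external exchangeability and consistency turn `E[Y² | X=x, S=1]` into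
`E[Y | X=x, S=0, A=2]`. The law of total expectation over `X` given `S=1` then gives `ψ`. -/

section

variable {Ω : Type*} [Fintype Ω] (P : Ω → ℝ)

lemma pr_nonneg (hP : ∀ ω, 0 ≤ P ω) (E : Ω → Prop) : 0 ≤ pr P E :=
  sum_nonneg fun ω _ => by split_ifs <;> simp [hP ω]

lemma pr_congr {E F : Ω → Prop} (h : ∀ ω, E ω ↔ F ω) : pr P E = pr P F :=
  sum_congr rfl fun ω _ => if_congr (h ω) rfl rfl

lemma pr_pos_of_cpr_pos (hP : ∀ ω, 0 ≤ P ω) {E F : Ω → Prop} (h : 0 < cpr P E F) :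
    0 < pr P (fun ω => E ω ∧ F ω) := by
  refine (pr_nonneg P hP _).lt_of_ne fun h0 => ?_
  simp [cpr, ← h0] at h

lemma cexp_congr {Y Z : Ω → ℝ} {E : Ω → Prop} (h : ∀ ω, E ω → Y ω = Z ω) :
    cexp P Y E = cexp P Z E := by
  unfold cexp
  congr 1
  exact sum_congr rfl fun ω _ => ite_congr rfl (fun hE => by rw [h ω hE]) fun _ => rfl

lemma cexp_sub (Y Z : Ω → ℝ) (E : Ω → Prop) :
    cexp P (fun ω => Y ω - Z ω) E = cexp P Y E - cexp P Z E := by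
  unfold cexp
  rw [← sub_div, ← sum_sub_distrib]
  congr 1
  exact sum_congr rfl fun ω _ => by split_ifs <;> ring

/-- On a null event both sides vanish: the division by zero in `cexp` matches the vanishing sum. -/
lemma cexp_mul_pr (hP : ∀ ω, 0 ≤ P ω) (Y : Ω → ℝ) (E : Ω → Prop) :
    cexp P Y E * pr P E = ∑ ω, if E ω then Y ω * P ω else 0 := by
  by_cases hE : pr P E = 0
  · have hnull : ∀ ω, E ω → P ω = 0 := fun ω hω => by
      have := (sum_eq_zero_iff_of_nonneg fun ω _ => by split_ifs <;> simp [hP ω]).mp hE ω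
        (mem_univ ω)
      simpa [hω] using this
    rw [hE, mul_zero, eq_comm]
    exact sum_eq_zero fun ω _ => by split_ifs with hω <;> simp [hnull ω, hω]
  · exact div_mul_cancel₀ _ hE

lemma sum_fiberwise_ite {𝓧 : Type*} [Fintype 𝓧] (X : Ω → 𝓧) (E : Ω → Prop) (g : Ω → ℝ) :
    ∑ x, ∑ ω, (if X ω = x ∧ E ω then g ω else 0) = ∑ ω, if E ω then g ω else 0 := by
  rw [sum_comm]
  refine sum_congr rfl fun ω _ => ?_
  simp only [ite_and, sum_ite_eq, mem_univ, if_true]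

lemma cexp_eq_sum_cexp_mul {𝓧 : Type*} [Fintype 𝓧] (hP : ∀ ω, 0 ≤ P ω) (X : Ω → 𝓧)
    (E : Ω → Prop) (Y : Ω → ℝ) :
    cexp P Y E = ∑ x ∈ univ.filter (fun x => 0 < pr P (fun ω => X ω = x ∧ E ω)),
      cexp P Y (fun ω => X ω = x ∧ E ω) * (pr P (fun ω => X ω = x ∧ E ω) / pr P E) := by
  rw [sum_filter_of_ne fun x _ hx => (pr_nonneg P hP _).lt_of_ne fun h0 => hx (by simp [← h0])]
  calc cexp P Y E
      = (∑ x, ∑ ω, if X ω = x ∧ E ω then Y ω * P ω else 0) / pr P E := by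
        rw [sum_fiberwise_ite]; rfl
    _ = ∑ x, cexp P Y (fun ω => X ω = x ∧ E ω) * pr P (fun ω => X ω = x ∧ E ω) / pr P E := by
        rw [sum_div]; simp only [cexp_mul_pr P hP]; congr!
    _ = _ := sum_congr rfl fun x _ => mul_div_assoc _ _ _

end

theorem stmt6_general    {Ω 𝓧 : Type*} [Fintype Ω] [Fintype 𝓧]
    (P : Ω → ℝ) (hP : ∀ ω, 0 ≤ P ω)
    (X : Ω → 𝓧) (S : Ω → ℕ) (A : Ω → ℕ) (Y : Ω → ℝ)
    (Y1 Y2 : Ω → ℝ)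
    (hcons1 : ∀ ω, A ω = 1 → Y1 ω = Y ω)
    (hexch1 : ∀ x, 0 < pr P (fun ω => X ω = x ∧ S ω = 1) → cexp P Y1 (fun ω => X ω = x ∧ S ω = 1) = cexp P Y1 (fun ω => X ω = x ∧ S ω = 1 ∧ A ω = 1))
    (hcons2 : ∀ ω, A ω = 2 → Y2 ω = Y ω)
    (htrans : ∀ x, 0 < pr P (fun ω => X ω = x ∧ S ω = 1) → 0 < pr P (fun ω => X ω = x ∧ S ω = 0) → cexp P Y2 (fun ω => X ω = x ∧ S ω = 1) = cexp P Y2 (fun ω => X ω = x ∧ S ω = 0))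
    (hextpos : ∀ x, 0 < pr P (fun ω => X ω = x ∧ S ω = 1) → 0 < cpr P (fun ω => S ω = 0) (fun ω => X ω = x))
    (hexchext : ∀ x, 0 < pr P (fun ω => X ω = x ∧ S ω = 0) → cexp P Y2 (fun ω => X ω = x ∧ S ω = 0) = cexp P Y2 (fun ω => X ω = x ∧ S ω = 0 ∧ A ω = 2))
    : cexp P (fun ω => Y1 ω - Y2 ω) (fun ω => S ω = 1) =
      ∑ x ∈ univ.filter (fun x => 0 < pr P (fun ω => X ω = x ∧ S ω = 1)),
        (cexp P Y (fun ω => X ω = x ∧ S ω = 1 ∧ A ω = 1) - cexp P Y (fun ω => X ω = x ∧ S ω = 0 ∧ A ω = 2)) *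
        (pr P (fun ω => X ω = x ∧ S ω = 1) / pr P (fun ω => S ω = 1)) := by
  rw [cexp_sub, cexp_eq_sum_cexp_mul P hP X, cexp_eq_sum_cexp_mul P hP X, ← sum_sub_distrib]
  refine sum_congr rfl fun x hx => ?_
  replace hx := (mem_filter.mp hx).2
  have hx0 : 0 < pr P (fun ω => X ω = x ∧ S ω = 0) :=
    (pr_pos_of_cpr_pos P hP (hextpos x hx)).trans_eq (pr_congr P fun _ => and_comm)
  have trial : cexp P Y1 (fun ω => X ω = x ∧ S ω = 1) =
      cexp P Y (fun ω => X ω = x ∧ S ω = 1 ∧ A ω = 1) :=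
    (hexch1 x hx).trans (cexp_congr P fun ω hω => hcons1 ω hω.2.2)
  have external : cexp P Y2 (fun ω => X ω = x ∧ S ω = 1) =
      cexp P Y (fun ω => X ω = x ∧ S ω = 0 ∧ A ω = 2) :=
    (htrans x hx hx0).trans <| (hexchext x hx0).trans (cexp_congr P fun ω hω => hcons2 ω hω.2.2)
  rw [trial, external, sub_mul]

theorem stmt6    {Ω 𝓧 : Type*} [Fintype Ω] [Fintype 𝓧]
    (P : Ω → ℝ) (hP : ∀ ω, 0 ≤ P ω) (hPsum : ∑ ω, P ω = 1)
    (X : Ω → 𝓧) (S : Ω → ℕ) (A : Ω → ℕ) (Y : Ω → ℝ)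
    (Y1 Y2 : Ω → ℝ)
    (hS1 : 0 < pr P (fun ω => S ω = 1))
    (hcons1 : ∀ ω, A ω = 1 → Y1 ω = Y ω)
    (hexch1 : ∀ x, 0 < pr P (fun ω => X ω = x ∧ S ω = 1) → cexp P Y1 (fun ω => X ω = x ∧ S ω = 1) = cexp P Y1 (fun ω => X ω = x ∧ S ω = 1 ∧ A ω = 1))
    (hpos1 : ∀ x, 0 < pr P (fun ω => X ω = x ∧ S ω = 1) → 0 < cpr P (fun ω => A ω = 1) (fun ω => X ω = x ∧ S ω = 1))
    (hcons2 : ∀ ω, A ω = 2 → Y2 ω = Y ω)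
    (htrans : ∀ x, 0 < pr P (fun ω => X ω = x ∧ S ω = 1) → 0 < pr P (fun ω => X ω = x ∧ S ω = 0) → cexp P Y2 (fun ω => X ω = x ∧ S ω = 1) = cexp P Y2 (fun ω => X ω = x ∧ S ω = 0))
    (hextpos : ∀ x, 0 < pr P (fun ω => X ω = x ∧ S ω = 1) → 0 < cpr P (fun ω => S ω = 0) (fun ω => X ω = x))
    (hexchext : ∀ x, 0 < pr P (fun ω => X ω = x ∧ S ω = 0) → cexp P Y2 (fun ω => X ω = x ∧ S ω = 0) = cexp P Y2 (fun ω => X ω = x ∧ S ω = 0 ∧ A ω = 2))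
    (hposext : ∀ x, 0 < pr P (fun ω => X ω = x ∧ S ω = 0) → 0 < cpr P (fun ω => A ω = 2) (fun ω => X ω = x ∧ S ω = 0))
    : cexp P (fun ω => Y1 ω - Y2 ω) (fun ω => S ω = 1) =
      ∑ x ∈ univ.filter (fun x => 0 < pr P (fun ω => X ω = x ∧ S ω = 1)),
        (cexp P Y (fun ω => X ω = x ∧ S ω = 1 ∧ A ω = 1) - cexp P Y (fun ω => X ω = x ∧ S ω = 0 ∧ A ω = 2)) *
        (pr P (fun ω => X ω = x ∧ S ω = 1) / pr P (fun ω => S ω = 1)) :=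
  stmt6_general P hP X S A Y Y1 Y2 hcons1 hexch1 hcons2 htrans hextpos hexchext
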